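/- For every Lyapunov regular point x ∈ 𝓛 and every u = (u^{(1)},…,u^{(k)}) ∈ E^u(x; r(x)) and v = (v^{(1)},…,v^{(k)}) ∈ E^s(x; r(x)) (components with respect to the Lyapunov splittings), one has dω_x(u,v) = Σ_{i=1}^k dω_x(u^{(i)}, v^{(i)}); equivalently, dω_x(u^{(i)}, v^{(j)}) = 0 whenever i ≠ j. -/
import Mathlib


/-!
Statement 19 (Lemma 8.1): at a Lyapunov regular point `x` of (the time-one map of) a
C² contact Anosov flow, the symplectic form `dω_x` pairs the Lyapunov splittings of
`E^u(x)` and `E^s(x)` diagonally: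
`dω_x(u,v) = ∑_i dω_x(u^{(i)}, v^{(i)})`, equivalently `dω_x(u^{(i)}, v^{(j)}) = 0`
for `i ≠ j`.

The set `𝓛` of Lyapunov regular points of `f = φ₁` is modelled by a type `L` with the
bijection `f : L ≃ L`, the splittings `E^u = ⊕ E^u_i`, `E^s = ⊕ E^s_i` live in a
model normed space `V` (with projections `projU x i`, `projS x i`), `df x` is the
(invertible) derivative of `f` at `x`, `omega2 x` is the bilinear form `dω_x`, which
is bounded by `C₀‖·‖‖·‖` and `df`-invariant, and the exponential growth/contraction
rates (3.4)/(8.1) of `df` on `E^u_i` and `E^s_i` along forward and backward iterates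
are supplied as hypotheses (`hgrowthU`, `hgrowthS`, backward versions included).
-/

/-- Lyapunov data for both the stable and unstable bundles of a contact Anosov flow,
together with the symplectic form `dω`. -/
structure ContactLyapunovSetup (L V : Type*) [NormedAddCommGroup V]
    [NormedSpace ℝ V] where
  /-- the time-one map on the set `𝓛` of Lyapunov regular points -/
  f : L ≃ L
  k : ℕ
  k_pos : 0 < k
  /-- the exponentials `λ₁ < ⋯ < λ_k` of the positive Lyapunov exponents (the
  negative ones are `-log λ₁ > ⋯ > -log λ_k` since the flow is contact) -/
  lam : Fin k → ℝ
  lam_mono : StrictMono lam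
  one_lt_lam₀ : 1 < lam ⟨0, k_pos⟩
  /-- the fixed small regularity constant `ε̂` -/
  εh : ℝ
  εh_pos : 0 < εh
  εh_gap : ∀ i j : Fin k, (i : ℕ) + 1 = (j : ℕ) →
    Real.exp (2 * εh) * lam i < lam j
  /-- the unstable and stable spaces -/
  Eu : L → Submodule ℝ V
  Es : L → Submodule ℝ V
  /-- the Lyapunov subspaces `E^u_i(x)`, `E^s_i(x)` -/
  Eui : L → Fin k → Submodule ℝ V
  Esi : L → Fin k → Submodule ℝ V
  /-- the projections of the Lyapunov splittings -/
  projU : L → Fin k → V →ₗ[ℝ] V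
  projS : L → Fin k → V →ₗ[ℝ] V
  projU_mem : ∀ x i v, projU x i v ∈ Eui x i
  projS_mem : ∀ x i v, projS x i v ∈ Esi x i
  projU_sum : ∀ x : L, ∀ v ∈ Eu x, (∑ i : Fin k, projU x i v) = v
  projS_sum : ∀ x : L, ∀ v ∈ Es x, (∑ i : Fin k, projS x i v) = v
  /-- the Lyapunov regularity radius `r(x)` -/
  r : L → ℝ
  r_pos : ∀ x, 0 < r x
  /-- the derivative `df(x)` -/
  df : L → V ≃ₗ[ℝ] V
  df_mapsU : ∀ x i, ∀ v ∈ Eui x i, df x v ∈ Eui (f x) i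
  df_mapsS : ∀ x i, ∀ v ∈ Esi x i, df x v ∈ Esi (f x) i
  /-- the symplectic form `dω_x` -/
  omega2 : L → V →ₗ[ℝ] V →ₗ[ℝ] ℝ
  C₀ : ℝ
  C₀_pos : 0 < C₀
  omega2_bound : ∀ x u v, |omega2 x u v| ≤ C₀ * ‖u‖ * ‖v‖
  /-- `dω` is `df`-invariant -/
  omega2_invariant : ∀ x u v, omega2 (f x) (df x u) (df x v) = omega2 x u v
  /-- a Lyapunov regularity function bounding the splitting -/
  R : L → ℝ
  R_ge_one : ∀ x, 1 ≤ R x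

namespace ContactLyapunovSetup

variable {L V : Type*} [NormedAddCommGroup V] [NormedSpace ℝ V]
  (S : ContactLyapunovSetup L V)

/-- the forward iterated derivative `df^n(x)`. -/
def dIter : ℕ → L → V →ₗ[ℝ] V
  | 0, _ => LinearMap.id
  | n + 1, x => ((S.df ((⇑S.f)^[n] x)).toLinearMap).comp (dIter n x)

/-- the backward iterated derivative `df^{-n}(x)`. -/
def dIterBack : ℕ → L → V →ₗ[ℝ] V
  | 0, _ => LinearMap.id
  | n + 1, x => ((S.df ((⇑S.f.symm)^[n + 1] x)).symm.toLinearMap).comp (dIterBack n x)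

end ContactLyapunovSetup


namespace ContactLyapunovSetup

variable {L V : Type*} [NormedAddCommGroup V] [NormedSpace ℝ V]
  (S : ContactLyapunovSetup L V)

lemma omega2_dIter (n : ℕ) (x : L) (u v : V) :
    S.omega2 ((⇑S.f)^[n] x) (S.dIter n x u) (S.dIter n x v) = S.omega2 x u v := by
  induction n with
  | zero => simp [dIter]
  | succ n ih =>
      simp only [dIter, LinearMap.coe_comp, Function.comp_apply, LinearEquiv.coe_coe]
      rw [Function.iterate_succ_apply', S.omega2_invariant, ih]

lemma omega2_dIterBack (n : ℕ) (x : L) (u v : V) :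
    S.omega2 ((⇑S.f.symm)^[n] x) (S.dIterBack n x u) (S.dIterBack n x v)
      = S.omega2 x u v := by
  induction n with
  | zero => simp [dIterBack]
  | succ n ih =>
      have hfy : S.f ((⇑S.f.symm)^[n + 1] x) = (⇑S.f.symm)^[n] x := by
        rw [Function.iterate_succ_apply']
        exact S.f.apply_symm_apply _
      have h := S.omega2_invariant ((⇑S.f.symm)^[n + 1] x)
        ((S.df ((⇑S.f.symm)^[n + 1] x)).symm (S.dIterBack n x u))
        ((S.df ((⇑S.f.symm)^[n + 1] x)).symm (S.dIterBack n x v))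
      rw [LinearEquiv.apply_symm_apply, LinearEquiv.apply_symm_apply, hfy, ih] at h
      simp only [dIterBack, LinearMap.coe_comp, Function.comp_apply, LinearEquiv.coe_coe]
      exact h.symm

lemma one_lt_lam (i : Fin S.k) : 1 < S.lam i :=
  lt_of_lt_of_le S.one_lt_lam₀ (S.lam_mono.monotone (by simp [Fin.le_def]))

lemma lam_pos (i : Fin S.k) : 0 < S.lam i := lt_trans one_pos (S.one_lt_lam i)

lemma gap_lt (i j : Fin S.k) (hij : (i : ℕ) < (j : ℕ)) :
    Real.exp (2 * S.εh) * S.lam i < S.lam j := by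
  have hk : (i : ℕ) + 1 < S.k := lt_of_le_of_lt hij j.isLt
  have := S.εh_gap i ⟨(i : ℕ) + 1, hk⟩ rfl
  exact lt_of_lt_of_le this (S.lam_mono.monotone (by simp [Fin.le_def]; omega))

end ContactLyapunovSetup

lemma eq_zero_of_le_geom (c K q : ℝ) (hq0 : 0 ≤ q) (hq1 : q < 1)
    (h : ∀ n : ℕ, |c| ≤ K * q ^ n) : c = 0 := by
  have hK : Filter.Tendsto (fun n : ℕ => K * q ^ n) Filter.atTop (nhds 0) := by
    simpa using (tendsto_pow_atTop_nhds_zero_of_lt_one hq0 hq1).const_mul K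
  have h0 : |c| ≤ 0 := ge_of_tendsto' hK h
  exact abs_eq_zero.mp (le_antisymm h0 (abs_nonneg c))

lemma geom_pow_eq (ε a b : ℝ) (_hb : b ≠ 0) (n : ℕ) :
    (Real.exp (2 * ε) * a / b) ^ n
      = Real.exp (n * ε) * Real.exp (n * ε) * a ^ n / b ^ n := by
  rw [div_pow, mul_pow, ← Real.exp_nat_mul, ← Real.exp_add]
  ring_nf

/-- **Lemma 8.1.**  For every Lyapunov regular point `x ∈ 𝓛` and all
`u ∈ E^u(x; r(x))`, `v ∈ E^s(x; r(x))`: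
`dω_x(u^{(i)}, v^{(j)}) = 0` for `i ≠ j`, and
`dω_x(u,v) = ∑_{i=1}^k dω_x(u^{(i)}, v^{(i)})`. -/
theorem symplectic_form_diagonal_on_lyapunov_splitting
    {L V : Type*} [NormedAddCommGroup V] [NormedSpace ℝ V]
    (S : ContactLyapunovSetup L V)
    (hgrowthU : ∀ (x : L) (i : Fin S.k), ∀ v ∈ S.Eui x i, ∀ n : ℕ,
      S.lam i ^ n * ‖v‖ / (S.R x * Real.exp (n * S.εh)) ≤ ‖S.dIter n x v‖ ∧
      ‖S.dIter n x v‖ ≤ S.R x * Real.exp (n * S.εh) * S.lam i ^ n * ‖v‖)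
    (hgrowthS : ∀ (x : L) (i : Fin S.k), ∀ v ∈ S.Esi x i, ∀ n : ℕ,
      ‖v‖ / (S.lam i ^ n * S.R x * Real.exp (n * S.εh)) ≤ ‖S.dIter n x v‖ ∧
      ‖S.dIter n x v‖ ≤ S.R x * Real.exp (n * S.εh) * ‖v‖ / S.lam i ^ n)
    (hgrowthUback : ∀ (x : L) (i : Fin S.k), ∀ v ∈ S.Eui x i, ∀ n : ℕ,
      ‖S.dIterBack n x v‖ ≤ S.R x * Real.exp (n * S.εh) * ‖v‖ / S.lam i ^ n)
    (hgrowthSback : ∀ (x : L) (i : Fin S.k), ∀ v ∈ S.Esi x i, ∀ n : ℕ,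
      ‖S.dIterBack n x v‖ ≤ S.R x * Real.exp (n * S.εh) * S.lam i ^ n * ‖v‖) :
    ∀ (x : L) (u v : V), u ∈ S.Eu x → ‖u‖ ≤ S.r x → v ∈ S.Es x → ‖v‖ ≤ S.r x →
      (∀ i j : Fin S.k, i ≠ j → S.omega2 x (S.projU x i u) (S.projS x j v) = 0) ∧
      S.omega2 x u v = ∑ i : Fin S.k, S.omega2 x (S.projU x i u) (S.projS x i v) :=  by
  intro x u v hu hru hv hrv
  have hC₀ := S.C₀_pos
  have hR : (0:ℝ) < S.R x := lt_of_lt_of_le one_pos (S.R_ge_one x)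
  -- off-diagonal vanishing
  have hoff : ∀ i j : Fin S.k, i ≠ j →
      S.omega2 x (S.projU x i u) (S.projS x j v) = 0 := by
    intro i j hij
    set a := S.projU x i u with ha
    set b := S.projS x j v
    have hau : a ∈ S.Eui x i := S.projU_mem x i u
    have hbv : b ∈ S.Esi x j := S.projS_mem x j v
    rcases lt_or_gt_of_ne (fun h => hij (by ext; exact h) : (i : ℕ) ≠ (j : ℕ)) with hlt | hgt
    · -- i < j : use forward iterates
      set q : ℝ := Real.exp (2 * S.εh) * S.lam i / S.lam j with hq
      have hljpos := S.lam_pos j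
      have hq0 : 0 ≤ q :=
        div_nonneg (mul_nonneg (Real.exp_pos _).le (S.lam_pos i).le) hljpos.le
      have hq1 : q < 1 := (div_lt_one hljpos).mpr (S.gap_lt i j hlt)
      apply eq_zero_of_le_geom _ (S.C₀ * (S.R x * S.R x * (‖a‖ * ‖b‖))) q hq0 hq1
      intro n
      have hinv := S.omega2_dIter n x a b
      have hbound := S.omega2_bound ((⇑S.f)^[n] x) (S.dIter n x a) (S.dIter n x b)
      have h1 := (hgrowthU x i a hau n).2
      have h2 := (hgrowthS x j b hbv n).2
      rw [hinv] at hbound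
      have hpow : q ^ n = Real.exp (n * S.εh) * Real.exp (n * S.εh)
          * S.lam i ^ n / S.lam j ^ n := geom_pow_eq _ _ _ hljpos.ne' n
      have hna : (0:ℝ) ≤ ‖S.dIter n x a‖ := norm_nonneg _
      have hnb : (0:ℝ) ≤ ‖S.dIter n x b‖ := norm_nonneg _
      calc |S.omega2 x a b| ≤ S.C₀ * ‖S.dIter n x a‖ * ‖S.dIter n x b‖ := hbound
        _ ≤ S.C₀ * (S.R x * Real.exp (n * S.εh) * S.lam i ^ n * ‖a‖)
            * (S.R x * Real.exp (n * S.εh) * ‖b‖ / S.lam j ^ n) :=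
            mul_le_mul (mul_le_mul_of_nonneg_left h1 hC₀.le) h2 hnb
              (mul_nonneg hC₀.le (mul_nonneg (mul_nonneg
                (mul_nonneg hR.le (Real.exp_pos _).le)
                (pow_pos (S.lam_pos i) n).le) (norm_nonneg _)))
        _ = S.C₀ * (S.R x * S.R x * (‖a‖ * ‖b‖)) * q ^ n := by
            rw [hpow]; field_simp
    · -- j < i : use backward iterates
      set q : ℝ := Real.exp (2 * S.εh) * S.lam j / S.lam i with hq
      have hlipos := S.lam_pos i
      have hq0 : 0 ≤ q :=
        div_nonneg (mul_nonneg (Real.exp_pos _).le (S.lam_pos j).le) hlipos.le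
      have hq1 : q < 1 := (div_lt_one hlipos).mpr (S.gap_lt j i hgt)
      apply eq_zero_of_le_geom _ (S.C₀ * (S.R x * S.R x * (‖a‖ * ‖b‖))) q hq0 hq1
      intro n
      have hinv := S.omega2_dIterBack n x a b
      have hbound := S.omega2_bound ((⇑S.f.symm)^[n] x) (S.dIterBack n x a) (S.dIterBack n x b)
      have h1 := hgrowthUback x i a hau n
      have h2 := hgrowthSback x j b hbv n
      rw [hinv] at hbound
      have hpow : q ^ n = Real.exp (n * S.εh) * Real.exp (n * S.εh)
          * S.lam j ^ n / S.lam i ^ n := geom_pow_eq _ _ _ hlipos.ne' n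
      have hnb : (0:ℝ) ≤ ‖S.dIterBack n x b‖ := norm_nonneg _
      calc |S.omega2 x a b| ≤ S.C₀ * ‖S.dIterBack n x a‖ * ‖S.dIterBack n x b‖ := hbound
        _ ≤ S.C₀ * (S.R x * Real.exp (n * S.εh) * ‖a‖ / S.lam i ^ n)
            * (S.R x * Real.exp (n * S.εh) * S.lam j ^ n * ‖b‖) :=
            mul_le_mul (mul_le_mul_of_nonneg_left h1 hC₀.le) h2 hnb
              (mul_nonneg hC₀.le (div_nonneg (mul_nonneg
                (mul_nonneg hR.le (Real.exp_pos _).le) (norm_nonneg _))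
                (pow_pos (S.lam_pos i) n).le))
        _ = S.C₀ * (S.R x * S.R x * (‖a‖ * ‖b‖)) * q ^ n := by
            rw [hpow]; field_simp
  refine ⟨hoff, ?_⟩
  conv_lhs => rw [← S.projU_sum x u hu, ← S.projS_sum x v hv]
  simp only [map_sum, LinearMap.sum_apply]
  apply Finset.sum_congr rfl
  intro i _
  rw [Finset.sum_eq_single i]
  · intro j _ hji; exact hoff j i hji
  · intro h; exact absurd (Finset.mem_univ i) h
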